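/- Let f₀(θ,v) = F(v²/2 + φ₀(θ)) with φ₀(θ) = -m₀ cos θ, m₀ > 0, where F: ℝ → ℝ₊ is continuous, C¹ and strictly decreasing on (-∞, e_*) with F = 0 on [e_*, ∞) (or F(e) → 0 as e → ∞ if e_* = ∞). Then f₀ is a fixed point of the rearrangement with respect to its own microscopic energy: f₀ = f₀^{*φ₀}, equivalently F(e) = f₀^♯(a_{φ₀}(e)) for all e ≥ min φ₀. -/

import Mathlib

open MeasureTheory Real Set
open scoped ENNReal

/-!
Write `E(θ, v) = v²/2 + φ(θ)`, so that `f₀ = F ∘ E`. Since `F` is antitone, `{f₀ > F e} ⊆ {E < e}`,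
so `F e` is admissible in the infimum defining `f₀^♯(a(e))`. Conversely, if `t < F e` then by
continuity `t < F e'` for some `e' > e`, hence `μ_{f₀}(t) ≥ a(e') > a(e)`: above `min φ` the
sublevel sets `{E < e'}` and `{E < e}` differ by the nonempty open set `{e < E < e'}`.
-/

/-- Distribution function μ_f(t) = |{(θ,v) ∈ T × ℝ : f(θ,v) > t}|, T = [0,2π). -/
noncomputable def distrib (f : ℝ × ℝ → ℝ) (t : ℝ) : ℝ≥0∞ :=
  volume {p : ℝ × ℝ | p.1 ∈ Set.Ico (0:ℝ) (2 * π) ∧ t < f p}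

/-- Pseudo-inverse f^♯(s) = inf{t ≥ 0 : μ_f(t) ≤ s}. -/
noncomputable def pseudoInv (f : ℝ × ℝ → ℝ) (s : ℝ≥0∞) : ℝ :=
  sInf {t : ℝ | 0 ≤ t ∧ distrib f t ≤ s}

/-- Phase-space volume a_φ(e) = |{(θ,v) ∈ T × ℝ : v²/2 + φ(θ) < e}|. -/
noncomputable def aVol (φ : ℝ → ℝ) (e : ℝ) : ℝ≥0∞ :=
  volume {p : ℝ × ℝ | p.1 ∈ Set.Ico (0:ℝ) (2 * π) ∧ p.2 ^ 2 / 2 + φ p.1 < e}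

section PhaseVolume

variable {φ : ℝ → ℝ}

theorem aVol_lt_top (hφ : Continuous φ) (e : ℝ) : aVol φ e < ⊤ := by
  obtain ⟨m, hm⟩ := (isCompact_Icc (a := 0) (b := 2 * π)).bddBelow_image hφ.continuousOn
  set R := √(2 * (e - m))
  refine lt_of_le_of_lt (measure_mono ?_) ((isCompact_Icc (a := 0) (b := 2 * π)).prod
    (isCompact_Icc (a := -R) (b := R))).measure_lt_top
  rintro ⟨θ, v⟩ ⟨hθ, hE⟩
  have hmθ : m ≤ φ θ := hm ⟨θ, Ico_subset_Icc_self hθ, rfl⟩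
  exact ⟨Ico_subset_Icc_self hθ, abs_le.mp (Real.abs_le_sqrt (by dsimp only at hE; linarith))⟩

theorem exists_energy_mem_Ioo {θ e e' : ℝ} (he : φ θ < e') (hee' : e < e') :
    ∃ v : ℝ, e < v ^ 2 / 2 + φ θ ∧ v ^ 2 / 2 + φ θ < e' := by
  obtain ⟨y, hy, hye'⟩ := exists_between (max_lt hee' he)
  refine ⟨√(2 * (y - φ θ)), ?_⟩
  rw [Real.sq_sqrt (by linarith [le_max_right e (φ θ)])]
  constructor <;> linarith [le_max_left e (φ θ)]

theorem aVol_lt_aVol (hφ : Continuous φ) {θ₀ e e' : ℝ} (hθ₀ : θ₀ ∈ Icc 0 (2 * π))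
    (he : φ θ₀ ≤ e) (hee' : e < e') : aVol φ e < aVol φ e' := by
  set E : ℝ × ℝ → ℝ := fun p => p.2 ^ 2 / 2 + φ p.1
  have hE : Continuous E := by fun_prop
  obtain ⟨θ, hθe', hθ⟩ : ((φ ⁻¹' Iio e') ∩ Ioo 0 (2 * π)).Nonempty := by
    refine mem_closure_iff.mp ?_ _ (isOpen_Iio.preimage hφ) (he.trans_lt hee')
    rwa [closure_Ioo (by positivity)]
  obtain ⟨v, hv⟩ := exists_energy_mem_Ioo hθe' hee'
  set U := Prod.fst ⁻¹' Ioo 0 (2 * π) ∩ E ⁻¹' Ioo e e'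
  have hU : IsOpen U := (isOpen_Ioo.preimage continuous_fst).inter (isOpen_Ioo.preimage hE)
  have hUpos : 0 < volume U := hU.measure_pos volume ⟨(θ, v), hθ, hv⟩
  have hdisj : Disjoint {p : ℝ × ℝ | p.1 ∈ Ico 0 (2 * π) ∧ E p < e} U :=
    disjoint_left.mpr fun p hp hpU => (hp.2.trans hpU.2.1).false
  calc aVol φ e < aVol φ e + volume U := ENNReal.lt_add_right (aVol_lt_top hφ e).ne hUpos.ne'
    _ = volume ({p : ℝ × ℝ | p.1 ∈ Ico 0 (2 * π) ∧ E p < e} ∪ U) :=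
      (measure_union hdisj hU.measurableSet).symm
    _ ≤ aVol φ e' := measure_mono <| union_subset (fun p hp => ⟨hp.1, hp.2.trans hee'⟩)
      fun p hp => ⟨Ioo_subset_Ico_self hp.1, hp.2.2⟩

end PhaseVolume

theorem pseudoInv_aVol_eq {φ F : ℝ → ℝ} {e : ℝ} (hF : Antitone F)
    (hFc : ContinuousWithinAt F (Ioi e) e) (hFe : 0 ≤ F e)
    (hmono : ∀ e', e < e' → aVol φ e < aVol φ e') :
    pseudoInv (fun p => F (p.2 ^ 2 / 2 + φ p.1)) (aVol φ e) = F e := by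
  refine IsLeast.csInf_eq ⟨⟨hFe, measure_mono fun p hp => ⟨hp.1, ?_⟩⟩, fun t ⟨_, ht⟩ => ?_⟩
  · exact lt_of_not_ge fun h => (hF h).not_gt hp.2
  by_contra! htF
  obtain ⟨e', hte', hee'⟩ := ((hFc.eventually (lt_mem_nhds htF)).and self_mem_nhdsWithin).exists
  have : aVol φ e' ≤ distrib (fun p => F (p.2 ^ 2 / 2 + φ p.1)) t :=
    measure_mono fun p hp => ⟨hp.1, hte'.trans_le (hF hp.2.le)⟩
  exact (hmono e' hee').not_ge (this.trans ht)

theorem antitone_of_strictAntiOn_of_eq_zero {F : ℝ → ℝ} {estar : EReal} (hF0 : ∀ e, 0 ≤ F e)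
    (hFanti : StrictAntiOn F {e : ℝ | (e : EReal) < estar})
    (hFzero : ∀ e : ℝ, estar ≤ (e : EReal) → F e = 0) : Antitone F := by
  intro x y hxy
  rcases lt_or_ge (y : EReal) estar with hy | hy
  · exact hFanti.antitoneOn ((EReal.coe_le_coe_iff.mpr hxy).trans_lt hy) hy hxy
  · rw [hFzero y hy]
    exact hF0 x

theorem steady_state_fixed_point_general (m₀ : ℝ) (hm₀ : 0 < m₀)
    (F : ℝ → ℝ) (estar : EReal)
    (hFc : Continuous F) (hF0 : ∀ e, 0 ≤ F e)
    (hFanti : StrictAntiOn F {e : ℝ | (e : EReal) < estar})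
    (hFzero : ∀ e : ℝ, estar ≤ (e : EReal) → F e = 0) :
    (∀ e : ℝ, -m₀ ≤ e →
        F e = pseudoInv (fun p : ℝ × ℝ => F (p.2 ^ 2 / 2 - m₀ * Real.cos p.1))
          (aVol (fun θ => -(m₀ * Real.cos θ)) e)) ∧
    (∀ p : ℝ × ℝ,
        F (p.2 ^ 2 / 2 - m₀ * Real.cos p.1)
          = pseudoInv (fun q : ℝ × ℝ => F (q.2 ^ 2 / 2 - m₀ * Real.cos q.1))
              (aVol (fun θ => -(m₀ * Real.cos θ)) (p.2 ^ 2 / 2 - m₀ * Real.cos p.1))) := by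
  have hF : Antitone F := antitone_of_strictAntiOn_of_eq_zero hF0 hFanti hFzero
  have main : ∀ e : ℝ, -m₀ ≤ e →
      F e = pseudoInv (fun p : ℝ × ℝ => F (p.2 ^ 2 / 2 - m₀ * Real.cos p.1))
        (aVol (fun θ => -(m₀ * Real.cos θ)) e) := fun e he => by
    simp only [sub_eq_add_neg]
    refine (pseudoInv_aVol_eq hF hFc.continuousWithinAt (hF0 e) fun e' hee' => ?_).symm
    exact aVol_lt_aVol (by fun_prop) ⟨le_rfl, by positivity⟩ (by simpa using he) hee'
  refine ⟨main, fun p => main _ ?_⟩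
  nlinarith [sq_nonneg p.2, Real.cos_le_one p.1]

/-- a steady state f₀(θ,v) = F(v²/2 - m₀ cos θ) with F continuous,
nonnegative, C¹ and strictly decreasing on (-∞,e_*), vanishing on [e_*,∞) (resp.
tending to 0 at +∞ when e_* = +∞) is a fixed point of the rearrangement with respect
to its own microscopic energy: F(e) = f₀^♯(a_{φ₀}(e)) for all e ≥ min φ₀ = -m₀,
i.e. f₀ = f₀^{*φ₀}. -/
theorem steady_state_fixed_point (m₀ : ℝ) (hm₀ : 0 < m₀)
    (F : ℝ → ℝ) (estar : EReal)
    (hFc : Continuous F) (hF0 : ∀ e, 0 ≤ F e)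
    (hFC1 : ContDiffOn ℝ 1 F {e : ℝ | (e : EReal) < estar})
    (hFanti : StrictAntiOn F {e : ℝ | (e : EReal) < estar})
    (hFzero : ∀ e : ℝ, estar ≤ (e : EReal) → F e = 0)
    (hFtop : estar = ⊤ → Filter.Tendsto F Filter.atTop (nhds 0))
    (hf0int : IntegrableOn (fun p : ℝ × ℝ => F (p.2 ^ 2 / 2 - m₀ * Real.cos p.1))
        {p : ℝ × ℝ | p.1 ∈ Set.Ico (0:ℝ) (2 * π)} volume) :
    (∀ e : ℝ, -m₀ ≤ e →
        F e = pseudoInv (fun p : ℝ × ℝ => F (p.2 ^ 2 / 2 - m₀ * Real.cos p.1))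
          (aVol (fun θ => -(m₀ * Real.cos θ)) e)) ∧
    (∀ p : ℝ × ℝ,
        F (p.2 ^ 2 / 2 - m₀ * Real.cos p.1)
          = pseudoInv (fun q : ℝ × ℝ => F (q.2 ^ 2 / 2 - m₀ * Real.cos q.1))
              (aVol (fun θ => -(m₀ * Real.cos θ)) (p.2 ^ 2 / 2 - m₀ * Real.cos p.1))) :=
  steady_state_fixed_point_general m₀ hm₀ F estar hFc hF0 hFanti hFzero
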